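/- Every graph G ∈ H₄* admits a frozen (χ(G)+1)-coloring; here χ(G) = p + 2 where p = |S₁| = |S₂|. -/

import Mathlib

open SimpleGraph

/-- A proper coloring of `G` with colors in `Fin ℓ`. -/
def IsProperColoring {V : Type*} (G : SimpleGraph V) (ℓ : ℕ) (f : V → Fin ℓ) : Prop :=
  ∀ ⦃a b : V⦄, G.Adj a b → f a ≠ f b

/-- A walk in the reconfiguration graph `R_ℓ(G)`: a sequence `c 0, c 1, …, c m` of proper
`ℓ`-colorings of `G` in which consecutive colorings differ on at most one vertex. -/
def IsRecolorSeq {V : Type*} (G : SimpleGraph V) (ℓ m : ℕ) (c : ℕ → V → Fin ℓ) : Prop :=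
  (∀ i ≤ m, IsProperColoring G ℓ (c i)) ∧
    ∀ i < m, ∀ a b : V, a ≠ b → c i a ≠ c (i + 1) a → c i b = c (i + 1) b

/-- The number of times the vertex `a` is recolored along the sequence `c 0, …, c m`. -/
def recolorCount {V : Type*} {ℓ : ℕ} (m : ℕ) (c : ℕ → V → Fin ℓ) (a : V) : ℕ :=
  ((Finset.range m).filter fun i => c i a ≠ c (i + 1) a).card

/-- The cycle `Cₙ` on `Fin n` (for `n ≥ 3`). -/
def cyc (n : ℕ) [NeZero n] : SimpleGraph (Fin n) := SimpleGraph.fromRel fun a b => a + 1 = b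

/-- The graph `P₂ + P₃`, the disjoint union of an edge and a path on three vertices. -/
def p2p3 : SimpleGraph (Fin 5) := SimpleGraph.fromRel fun a b =>
  (a = 0 ∧ b = 1) ∨ (a = 2 ∧ b = 3) ∨ (a = 3 ∧ b = 4)

/-- Adjacency in the 6-cycle on `Fin 6` (indices mod 6). -/
def c6adj (i j : Fin 6) : Prop := i + 1 = j ∨ j + 1 = i

/-- The class `H₄*`: six vertices `v 0, …, v 5` inducing a 6-cycle and two disjoint cliques
`S₁, S₂` with `|S₁| = |S₂| = p ≥ 1`; `S₁` is complete to `{v₁,v₂,v₃,v₆}` and `S₂` to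
`{v₂,v₃,v₄,v₅}`; no other edges. (Here `vᵢ` of the paper is `v (i-1)`.) -/
structure H4StarData {V : Type*} (G : SimpleGraph V) (p : ℕ) where
  v : Fin 6 → V
  S1 : Finset V
  S2 : Finset V
  inj : Function.Injective v
  notin : ∀ i, v i ∉ S1 ∧ v i ∉ S2
  d12 : Disjoint S1 S2
  card1 : S1.card = p
  card2 : S2.card = p
  hp : 1 ≤ p
  cover : ∀ x : V, (x ∈ S1 ∨ x ∈ S2) ∨ ∃ i, x = v i
  adj_iff : ∀ x y : V, G.Adj x y ↔ x ≠ y ∧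
    ((∃ i j : Fin 6, x = v i ∧ y = v j ∧ c6adj i j) ∨
     (x ∈ S1 ∧ y ∈ S1) ∨ (x ∈ S2 ∧ y ∈ S2) ∨
     (x ∈ S1 ∧ (y = v 0 ∨ y = v 1 ∨ y = v 2 ∨ y = v 5)) ∨
     (y ∈ S1 ∧ (x = v 0 ∨ x = v 1 ∨ x = v 2 ∨ x = v 5)) ∨
     (x ∈ S2 ∧ (y = v 1 ∨ y = v 2 ∨ y = v 3 ∨ y = v 4)) ∨
     (y ∈ S2 ∧ (x = v 1 ∨ x = v 2 ∨ x = v 3 ∨ x = v 4)))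

/-! Both cliques are colored bijectively by the same `p` colors, and the cycle by the remaining
ones. With two colors alternating on the (even) cycle this uses `p + 2` colors, which is optimal
because `S₁ ∪ {v₂, v₃}` is a clique. With three colors `i mod 3` on the cycle the coloring is
frozen: every cycle vertex sees three consecutive residues on the cycle and is complete to `S₁`
or to `S₂`, while `S₁` and `S₂` are complete to the consecutive triples `v₆ v₁ v₂` and
`v₂ v₃ v₄`. -/

def IsFrozenColoring {V : Type*} (G : SimpleGraph V) {ℓ : ℕ} (φ : V → Fin ℓ) : Prop :=
  ∀ x col, ∃ y, (y = x ∨ G.Adj x y) ∧ φ y = col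

lemma c6adj_ne {i j : Fin 6} : c6adj i j → i ≠ j := by
  revert i j; unfold c6adj; decide

lemma ofNat_two_ne_of_c6adj : ∀ i j : Fin 6, c6adj i j → Fin.ofNat 2 i ≠ Fin.ofNat 2 j := by
  unfold c6adj; decide

lemma ofNat_three_ne_of_c6adj : ∀ i j : Fin 6, c6adj i j → Fin.ofNat 3 i ≠ Fin.ofNat 3 j := by
  unfold c6adj; decide

lemma exists_c6adj_ofNat_three_eq :
    ∀ (i : Fin 6) (r : Fin 3), ∃ j, (j = i ∨ c6adj i j) ∧ Fin.ofNat 3 j = r := by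
  unfold c6adj; decide

namespace H4StarData

variable {V : Type*} {G : SimpleGraph V} {p : ℕ} (h : H4StarData G p)

def cycleNbrs1 : Finset (Fin 6) := {0, 1, 2, 5}

def cycleNbrs2 : Finset (Fin 6) := {1, 2, 3, 4}

lemma cycleNbrs1_union_cycleNbrs2 (i : Fin 6) : i ∈ cycleNbrs1 ∨ i ∈ cycleNbrs2 := by
  revert i; decide

lemma notMem_S1_of_mem_S2 {x : V} (hx : x ∈ h.S2) : x ∉ h.S1 :=
  fun hx1 => Finset.disjoint_left.mp h.d12 hx1 hx

lemma adj_v_of_c6adj {i j : Fin 6} (hij : c6adj i j) : G.Adj (h.v i) (h.v j) :=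
  (h.adj_iff _ _).2 ⟨h.inj.ne (c6adj_ne hij), Or.inl ⟨i, j, rfl, rfl, hij⟩⟩

lemma adj_of_mem_S1 {x y : V} (hx : x ∈ h.S1) (hy : y ∈ h.S1) (hxy : x ≠ y) : G.Adj x y :=
  (h.adj_iff _ _).2 ⟨hxy, Or.inr <| Or.inl ⟨hx, hy⟩⟩

lemma adj_of_mem_S2 {x y : V} (hx : x ∈ h.S2) (hy : y ∈ h.S2) (hxy : x ≠ y) : G.Adj x y :=
  (h.adj_iff _ _).2 ⟨hxy, Or.inr <| Or.inr <| Or.inl ⟨hx, hy⟩⟩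

lemma adj_S1_v {x : V} (hx : x ∈ h.S1) {i : Fin 6} (hi : i ∈ cycleNbrs1) : G.Adj x (h.v i) := by
  refine (h.adj_iff _ _).2 ⟨fun e => (h.notin i).1 (e ▸ hx), Or.inr <| Or.inr <| Or.inr <| Or.inl
    ⟨hx, ?_⟩⟩
  simp only [cycleNbrs1, Finset.mem_insert, Finset.mem_singleton] at hi
  rcases hi with rfl | rfl | rfl | rfl <;> simp

lemma adj_S2_v {x : V} (hx : x ∈ h.S2) {i : Fin 6} (hi : i ∈ cycleNbrs2) : G.Adj x (h.v i) := by
  refine (h.adj_iff _ _).2 ⟨fun e => (h.notin i).2 (e ▸ hx), Or.inr <| Or.inr <| Or.inr <| Or.inr <|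
    Or.inr <| Or.inl ⟨hx, ?_⟩⟩
  simp only [cycleNbrs2, Finset.mem_insert, Finset.mem_singleton] at hi
  rcases hi with rfl | rfl | rfl | rfl <;> simp

lemma add_two_le_chromaticNumber (h : H4StarData G p) : ((p + 2 : ℕ) : ℕ∞) ≤ G.chromaticNumber := by
  classical
  have hclique : G.IsClique (insert (h.v 1) (insert (h.v 2) h.S1) : Finset V) := by
    rw [Finset.coe_insert, Finset.coe_insert, isClique_insert, isClique_insert]
    refine ⟨⟨fun x hx y hy => h.adj_of_mem_S1 hx hy,
      fun x hx _ => (h.adj_S1_v hx (by decide)).symm⟩, ?_⟩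
    rintro x (rfl | hx) -
    · exact h.adj_v_of_c6adj (Or.inl rfl)
    · exact (h.adj_S1_v hx (by decide)).symm
  have hcard : (insert (h.v 1) (insert (h.v 2) h.S1)).card = p + 2 := by
    rw [Finset.card_insert_of_notMem, Finset.card_insert_of_notMem (h.notin 2).1, h.card1]
    simp only [Finset.mem_insert, not_or]
    exact ⟨h.inj.ne (by decide), (h.notin 1).1⟩
  exact hcard ▸ hclique.card_le_chromaticNumber

noncomputable def S1EquivFin : h.S1 ≃ Fin p := Finset.equivFinOfCardEq h.card1

noncomputable def S2EquivFin : h.S2 ≃ Fin p := Finset.equivFinOfCardEq h.card2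

variable {k : ℕ}

noncomputable def coloring (c : Fin 6 → Fin k) (x : V) : Fin (p + k) :=
  open Classical in
  if hx : x ∈ h.S1 then Fin.castAdd k (h.S1EquivFin ⟨x, hx⟩)
  else if hx : x ∈ h.S2 then Fin.castAdd k (h.S2EquivFin ⟨x, hx⟩)
  else Fin.natAdd p (c (Function.invFun h.v x))

variable (c : Fin 6 → Fin k)

lemma coloring_of_mem_S1 {x : V} (hx : x ∈ h.S1) :
    h.coloring c x = Fin.castAdd k (h.S1EquivFin ⟨x, hx⟩) := dif_pos hx

lemma coloring_of_mem_S2 {x : V} (hx : x ∈ h.S2) :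
    h.coloring c x = Fin.castAdd k (h.S2EquivFin ⟨x, hx⟩) := by
  rw [coloring, dif_neg (h.notMem_S1_of_mem_S2 hx), dif_pos hx]

lemma coloring_v (i : Fin 6) : h.coloring c (h.v i) = Fin.natAdd p (c i) := by
  rw [coloring, dif_neg (h.notin i).1, dif_neg (h.notin i).2,
    Function.leftInverse_invFun h.inj i]

lemma coloring_S1EquivFin_symm (a : Fin p) :
    h.coloring c (h.S1EquivFin.symm a) = Fin.castAdd k a := by
  rw [h.coloring_of_mem_S1 c (h.S1EquivFin.symm a).2, Subtype.coe_eta, Equiv.apply_symm_apply]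

lemma coloring_S2EquivFin_symm (a : Fin p) :
    h.coloring c (h.S2EquivFin.symm a) = Fin.castAdd k a := by
  rw [h.coloring_of_mem_S2 c (h.S2EquivFin.symm a).2, Subtype.coe_eta, Equiv.apply_symm_apply]

lemma coloring_ne_coloring_v {x : V} (hx : x ∈ h.S1 ∨ x ∈ h.S2) (i : Fin 6) :
    h.coloring c x ≠ h.coloring c (h.v i) := by
  intro hxi
  have hlt : (h.coloring c x : ℕ) < p := by
    rcases hx with hx | hx
    · rw [h.coloring_of_mem_S1 c hx]; exact Fin.castAdd_lt _ _
    · rw [h.coloring_of_mem_S2 c hx]; exact Fin.castAdd_lt _ _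
  rw [hxi, h.coloring_v, Fin.val_natAdd] at hlt
  omega

lemma isProperColoring_coloring (hc : ∀ i j, c6adj i j → c i ≠ c j) :
    IsProperColoring G (p + k) (h.coloring c) := by
  intro a b hab hcol
  obtain ⟨hne, hab⟩ := (h.adj_iff a b).1 hab
  rcases hab with ⟨i, j, rfl, rfl, hij⟩ | ⟨ha, hb⟩ | ⟨ha, hb⟩ | ⟨ha, hb⟩ | ⟨hb, ha⟩ |
    ⟨ha, hb⟩ | ⟨hb, ha⟩
  · rw [h.coloring_v, h.coloring_v] at hcol
    exact hc i j hij ((Fin.natAdd_inj _).1 hcol)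
  · rw [h.coloring_of_mem_S1 c ha, h.coloring_of_mem_S1 c hb, Fin.castAdd_inj] at hcol
    exact hne (congrArg Subtype.val (h.S1EquivFin.injective hcol))
  · rw [h.coloring_of_mem_S2 c ha, h.coloring_of_mem_S2 c hb, Fin.castAdd_inj] at hcol
    exact hne (congrArg Subtype.val (h.S2EquivFin.injective hcol))
  · obtain ⟨j, rfl⟩ : ∃ j, b = h.v j := by rcases hb with rfl | rfl | rfl | rfl <;> exact ⟨_, rfl⟩
    exact h.coloring_ne_coloring_v c (.inl ha) j hcol
  · obtain ⟨j, rfl⟩ : ∃ j, a = h.v j := by rcases ha with rfl | rfl | rfl | rfl <;> exact ⟨_, rfl⟩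
    exact h.coloring_ne_coloring_v c (.inl hb) j hcol.symm
  · obtain ⟨j, rfl⟩ : ∃ j, b = h.v j := by rcases hb with rfl | rfl | rfl | rfl <;> exact ⟨_, rfl⟩
    exact h.coloring_ne_coloring_v c (.inr ha) j hcol
  · obtain ⟨j, rfl⟩ : ∃ j, a = h.v j := by rcases ha with rfl | rfl | rfl | rfl <;> exact ⟨_, rfl⟩
    exact h.coloring_ne_coloring_v c (.inr hb) j hcol.symm

lemma S1_or_S2_subset_closedNbhd (x : V) :
    (∀ y ∈ h.S1, y = x ∨ G.Adj x y) ∨ (∀ y ∈ h.S2, y = x ∨ G.Adj x y) := by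
  rcases h.cover x with (hx | hx) | ⟨i, rfl⟩
  · exact .inl fun y hy => or_iff_not_imp_left.2 fun hyx => h.adj_of_mem_S1 hx hy (Ne.symm hyx)
  · exact .inr fun y hy => or_iff_not_imp_left.2 fun hyx => h.adj_of_mem_S2 hx hy (Ne.symm hyx)
  · rcases cycleNbrs1_union_cycleNbrs2 i with hi | hi
    · exact .inl fun y hy => .inr (h.adj_S1_v hy hi).symm
    · exact .inr fun y hy => .inr (h.adj_S2_v hy hi).symm

lemma isFrozenColoring_coloring (hcyc : ∀ i r, ∃ j, (j = i ∨ c6adj i j) ∧ c j = r)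
    (h1 : ∀ r, ∃ j ∈ cycleNbrs1, c j = r) (h2 : ∀ r, ∃ j ∈ cycleNbrs2, c j = r) :
    IsFrozenColoring G (h.coloring c) := by
  intro x col
  induction col using Fin.addCases with
  | left a =>
    rcases h.S1_or_S2_subset_closedNbhd x with hS | hS
    · exact ⟨_, hS _ (h.S1EquivFin.symm a).2, h.coloring_S1EquivFin_symm c a⟩
    · exact ⟨_, hS _ (h.S2EquivFin.symm a).2, h.coloring_S2EquivFin_symm c a⟩
  | right r =>
    suffices ∃ j, (h.v j = x ∨ G.Adj x (h.v j)) ∧ c j = r by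
      obtain ⟨j, hj, rfl⟩ := this
      exact ⟨_, hj, h.coloring_v c j⟩
    rcases h.cover x with (hx | hx) | ⟨i, rfl⟩
    · obtain ⟨j, hj, rfl⟩ := h1 r
      exact ⟨j, .inr (h.adj_S1_v hx hj), rfl⟩
    · obtain ⟨j, hj, rfl⟩ := h2 r
      exact ⟨j, .inr (h.adj_S2_v hx hj), rfl⟩
    · obtain ⟨j, hj | hj, rfl⟩ := hcyc i r
      · exact ⟨j, .inl (congrArg h.v hj), rfl⟩
      · exact ⟨j, .inr (h.adj_v_of_c6adj hj), rfl⟩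

lemma chromaticNumber_eq (h : H4StarData G p) : G.chromaticNumber = ((p + 2 : ℕ) : ℕ∞) := by
  have hcol : G.Colorable (p + 2) :=
    ⟨Coloring.mk (h.coloring (Fin.ofNat 2 ·)) fun hab =>
      h.isProperColoring_coloring _ ofNat_two_ne_of_c6adj hab⟩
  exact le_antisymm hcol.chromaticNumber_le h.add_two_le_chromaticNumber

lemma isFrozenColoring_coloring_ofNat_three :
    IsFrozenColoring G (h.coloring (Fin.ofNat 3 ·)) :=
  h.isFrozenColoring_coloring _ exists_c6adj_ofNat_three_eq (by decide) (by decide)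

end H4StarData

theorem stmt13_general {V : Type*} {G : SimpleGraph V} {p : ℕ} (h : H4StarData G p) :
    G.chromaticNumber = ((p + 2 : ℕ) : ℕ∞) ∧
    ∃ φ : V → Fin (p + 3), IsProperColoring G (p + 3) φ ∧
      ∀ x : V, ∀ col : Fin (p + 3), ∃ y, (y = x ∨ G.Adj x y) ∧ φ y = col :=
  ⟨h.chromaticNumber_eq, _, h.isProperColoring_coloring _ ofNat_three_ne_of_c6adj,
    h.isFrozenColoring_coloring_ofNat_three⟩

/-- every `G ∈ H₄*` has `χ(G) = p + 2` and admits a frozen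
`(χ(G)+1)`-coloring, i.e. a proper `(p+3)`-coloring in which every color appears in the
closed neighborhood of every vertex. -/
theorem stmt13 {V : Type*} [Fintype V] {G : SimpleGraph V} {p : ℕ} (h : H4StarData G p) :
    G.chromaticNumber = ((p + 2 : ℕ) : ℕ∞) ∧
    ∃ φ : V → Fin (p + 3), IsProperColoring G (p + 3) φ ∧
      ∀ x : V, ∀ col : Fin (p + 3), ∃ y, (y = x ∨ G.Adj x y) ∧ φ y = col :=
  stmt13_general h
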